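/- arXiv:2308.05228 — 5 statements merged into one kernel-verified Lean document; each statement's English description precedes it below -/
import Mathlib

section
/- Let b > 2 with b not of the form 2^r + 1 for any integer r ≥ 0, and let p be the smallest odd prime dividing b−1. Then the maximum length of an arithmetic progression with common difference 2 consisting entirely of b-anti-Niven numbers is exactly p−1. -/
/-- Base-`b` digit sum of `n`. -/
def sdig (b n : ℕ) : ℕ := (Nat.digits b n).sum

/-- A positive integer `n` is `b`-anti-Niven if it is coprime to its base-`b` digit sum. -/
def AntiNiven (b n : ℕ) : Prop := 0 < n ∧ Nat.gcd n (sdig b n) = 1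

private lemma sdig_zero (b : ℕ) : sdig b 0 = 0 := by simp [sdig]

private lemma sdig_step {b : ℕ} (hb : 1 < b) (x : ℕ) :
    sdig b x = x % b + sdig b (x / b) := by
  rcases Nat.eq_zero_or_pos x with h | h
  · subst h; simp [sdig]
  · unfold sdig
    rw [Nat.digits_def' hb h, List.sum_cons]

private lemma sdig_of_lt {b x : ℕ} (hb : 1 < b) (hx : x < b) : sdig b x = x := by
  rw [sdig_step hb x, Nat.mod_eq_of_lt hx, Nat.div_eq_of_lt hx, sdig_zero]
  omega

private lemma sdig_add_mul_pow {b : ℕ} (hb : 1 < b) :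
    ∀ (k x m : ℕ), x < b ^ k → sdig b (x + m * b ^ k) = sdig b x + sdig b m := by
  intro k
  induction k with
  | zero =>
      intro x m hx
      have hx0 : x = 0 := by simpa using hx
      subst hx0
      simp [sdig_zero]
  | succ k ih =>
      intro x m hx
      have hb0 : 0 < b := by omega
      have hrw : m * b ^ (k + 1) = m * b ^ k * b := by ring
      have h1 : (x + m * b ^ (k + 1)) % b = x % b := by
        rw [hrw, Nat.add_mul_mod_self_right]
      have h2 : (x + m * b ^ (k + 1)) / b = x / b + m * b ^ k := by
        rw [hrw, Nat.add_mul_div_right _ _ hb0]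
      have hxd : x / b < b ^ k := by
        apply Nat.div_lt_of_lt_mul
        calc x < b ^ (k + 1) := hx
          _ = b * b ^ k := by ring
      rw [sdig_step hb (x + m * b ^ (k + 1)), h1, h2, ih _ m hxd, sdig_step hb x]
      omega

private lemma sdig_add_sum {b : ℕ} (hb : 1 < b) (E : ℕ) (hE : 1 ≤ E) (x : ℕ)
    (hx : x < b ^ (2 * E)) :
    ∀ k : ℕ, (x + ∑ t ∈ Finset.range k, b ^ (2 * E * (t + 1))) < b ^ (2 * E * (k + 1)) ∧
      sdig b (x + ∑ t ∈ Finset.range k, b ^ (2 * E * (t + 1))) = sdig b x + k := by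
  intro k
  induction k with
  | zero =>
      constructor
      · simpa using hx
      · simp
  | succ k ih =>
      obtain ⟨ih1, ih2⟩ := ih
      have hstep : x + ∑ t ∈ Finset.range (k + 1), b ^ (2 * E * (t + 1))
          = (x + ∑ t ∈ Finset.range k, b ^ (2 * E * (t + 1))) + 1 * b ^ (2 * E * (k + 1)) := by
        rw [Finset.sum_range_succ, one_mul]
        ring
      have hexp : 2 * E * (k + 1) + 1 ≤ 2 * E * (k + 1 + 1) := by
        have h : 2 * E * (k + 1 + 1) = 2 * E * (k + 1) + 2 * E := by ring
        omega
      constructor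
      · rw [hstep, one_mul]
        calc (x + ∑ t ∈ Finset.range k, b ^ (2 * E * (t + 1))) + b ^ (2 * E * (k + 1))
            < b ^ (2 * E * (k + 1)) + b ^ (2 * E * (k + 1)) := by omega
          _ = 2 * b ^ (2 * E * (k + 1)) := by ring
          _ ≤ b * b ^ (2 * E * (k + 1)) := Nat.mul_le_mul_right _ hb
          _ = b ^ (2 * E * (k + 1) + 1) := by rw [pow_succ]; ring
          _ ≤ b ^ (2 * E * (k + 1 + 1)) := Nat.pow_le_pow_right (by omega) hexp
      · rw [hstep, sdig_add_mul_pow hb (2 * E * (k + 1)) _ 1 ih1, ih2,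
          sdig_of_lt hb hb]
        omega

theorem stmt_7 (b p : ℕ) (hb : 2 < b) (hpow : ¬ ∃ r : ℕ, b = 2 ^ r + 1)
    (hp : p.Prime) (hodd : Odd p) (hpb : p ∣ b - 1)
    (hmin : ∀ q : ℕ, q.Prime → Odd q → q ∣ b - 1 → p ≤ q) :
    IsGreatest {t : ℕ | ∃ n : ℕ, 0 < n ∧ ∀ j : ℕ, j < t → AntiNiven b (n + 2 * j)}
      (p - 1) := by
  have hb2 : 1 < b := by omega
  obtain ⟨c0, hc0⟩ := hodd
  have hp3 : 3 ≤ p := by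
    have := hp.two_le; omega
  have hbp : p ≤ b - 1 := Nat.le_of_dvd (by omega) hpb
  constructor
  · -- membership : there is a run of length p - 1
    obtain ⟨k, hk⟩ := hpb
    have hk1 : 1 ≤ k := by
      rcases Nat.eq_zero_or_pos k with h | h
      · subst h; omega
      · exact h
    by_cases hcase : k = 1
    · -- Case A : b = p + 1
      have hk' : b - 1 = p := by rw [hcase, mul_one] at hk; exact hk
      have hbp1 : b = p + 1 := by omega
      refine ⟨b + 1, by omega, ?_⟩
      intro j hj
      refine ⟨by omega, ?_⟩
      by_cases hx : 1 + 2 * j < b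
      · -- no carry into second digit
        have hd : sdig b (b + 1 + 2 * j) = 2 + 2 * j := by
          have h := sdig_add_mul_pow hb2 1 (1 + 2 * j) 1 (by simpa using hx)
          rw [pow_one, one_mul] at h
          rw [show b + 1 + 2 * j = 1 + 2 * j + b from by omega, h,
            sdig_of_lt hb2 hx, sdig_of_lt hb2 hb2]
          omega
        rw [hd]
        by_contra hne
        obtain ⟨q, hq, hqd⟩ := Nat.exists_prime_and_dvd hne
        have hqm : q ∣ b + 1 + 2 * j := hqd.trans (Nat.gcd_dvd_left _ _)
        have hqs : q ∣ 2 + 2 * j := hqd.trans (Nat.gcd_dvd_right _ _)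
        have hqp : q ∣ p := by
          have h1 := Nat.dvd_sub hqm hqs
          rwa [show b + 1 + 2 * j - (2 + 2 * j) = p from by omega] at h1
        have hqep : q = p := (Nat.prime_dvd_prime_iff_eq hq hp).mp hqp
        subst hqep
        have h2 : q ∣ 2 * (j + 1) := by
          rwa [show 2 * (j + 1) = 2 + 2 * j from by ring]
        rcases (Nat.Prime.dvd_mul hq).mp h2 with h | h
        · have := Nat.le_of_dvd (by norm_num) h; omega
        · have := Nat.le_of_dvd (by omega) h; omega
      · -- carry into second digit
        have hxgt : b < 1 + 2 * j := by
          rcases Nat.lt_or_ge b (1 + 2 * j) with h | h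
          · exact h
          · exfalso
            have : 1 + 2 * j = b := by omega
            omega
        have hylt : 1 + 2 * j - b < b := by omega
        have hd : sdig b (b + 1 + 2 * j) = (1 + 2 * j - b) + 2 := by
          have h := sdig_add_mul_pow hb2 1 (1 + 2 * j - b) 2 (by simpa using hylt)
          rw [pow_one] at h
          rw [show b + 1 + 2 * j = (1 + 2 * j - b) + 2 * b from by omega, h,
            sdig_of_lt hb2 hylt, sdig_of_lt hb2 (by omega)]
        rw [hd]
        by_contra hne
        obtain ⟨q, hq, hqd⟩ := Nat.exists_prime_and_dvd hne
        have hqm : q ∣ b + 1 + 2 * j := hqd.trans (Nat.gcd_dvd_left _ _)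
        have hqs : q ∣ (1 + 2 * j - b) + 2 := hqd.trans (Nat.gcd_dvd_right _ _)
        have hq2p : q ∣ 2 * p := by
          have h1 := Nat.dvd_sub hqm hqs
          rwa [show b + 1 + 2 * j - ((1 + 2 * j - b) + 2) = 2 * p from by omega] at h1
        rcases (Nat.Prime.dvd_mul hq).mp hq2p with h | h
        · have hq2 : q = 2 := (Nat.prime_dvd_prime_iff_eq hq Nat.prime_two).mp h
          subst hq2
          obtain ⟨d, hd2⟩ := hqs
          omega
        · have hqp : q = p := (Nat.prime_dvd_prime_iff_eq hq hp).mp h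
          subst hqp
          have := Nat.le_of_dvd (by omega) hqs
          omega
    · -- Case B : b - 1 ≥ 2 p
      have hk2 : 2 ≤ k := by omega
      have h2p : 2 * p ≤ b - 1 := by
        calc 2 * p = p * 2 := by ring
          _ ≤ p * k := Nat.mul_le_mul_left p hk2
          _ = b - 1 := hk.symm
      have hbm1 : b - 1 ≠ 0 := by omega
      have hbne : b ≠ 0 := by omega
      set J := ordCompl[2] (b - 1) with hJdef
      set K := ordCompl[2] b with hKdef
      have hJdvd : J ∣ b - 1 := Nat.ordCompl_dvd (b - 1) 2
      have hKdvd : K ∣ b := Nat.ordCompl_dvd b 2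
      have hJodd : ¬ 2 ∣ J := Nat.not_dvd_ordCompl Nat.prime_two hbm1
      have hJpos : 0 < J := Nat.ordCompl_pos 2 hbm1
      have hKJ : Nat.Coprime K J := by
        rw [Nat.coprime_iff_gcd_eq_one]
        by_contra hne
        obtain ⟨q, hq, hqd⟩ := Nat.exists_prime_and_dvd hne
        have hq1 : q ∣ b := (hqd.trans (Nat.gcd_dvd_left _ _)).trans hKdvd
        have hq2 : q ∣ b - 1 := (hqd.trans (Nat.gcd_dvd_right _ _)).trans hJdvd
        have : q ∣ 1 := by
          have h1 := Nat.dvd_sub hq1 hq2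
          rwa [show b - (b - 1) = 1 from by omega] at h1
        exact hq.ne_one (Nat.dvd_one.mp this)
      have h2J : Nat.Coprime 2 J := (Nat.Prime.coprime_iff_not_dvd Nat.prime_two).mpr hJodd
      have hcop : Nat.Coprime (2 * K) J := Nat.Coprime.mul h2J hKJ
      obtain ⟨σ, hσ1, hσ2⟩ := Nat.chineseRemainder hcop 0 ((J - (p + 1) % J) % J)
      have h2Kσ : 2 * K ∣ σ := Nat.modEq_zero_iff_dvd.mp hσ1
      have hσeven : 2 ∣ σ := dvd_trans ⟨K, rfl⟩ h2Kσ
      have hJσ : J ∣ σ + (p + 1) := by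
        have h1 : σ + (p + 1) ≡ (J - (p + 1) % J) % J + (p + 1) % J [MOD J] :=
          Nat.ModEq.add hσ2 (Nat.mod_modEq (p + 1) J).symm
        have h3 : J ∣ (J - (p + 1) % J) % J + (p + 1) % J := by
          rcases Nat.eq_zero_or_pos ((p + 1) % J) with h | h
          · rw [h, Nat.add_zero, Nat.sub_zero, Nat.mod_self]
            exact dvd_zero J
          · have hlt : (p + 1) % J < J := Nat.mod_lt _ hJpos
            rw [Nat.mod_eq_of_lt (by omega : J - (p + 1) % J < J),
              show J - (p + 1) % J + (p + 1) % J = J from by omega]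
        exact Nat.modEq_zero_iff_dvd.mp (h1.trans (Nat.modEq_zero_iff_dvd.mpr h3))
      set smax := σ + 2 * p + 3 with hsmaxdef
      set E := Nat.factorial smax with hEdef
      have hE1 : 1 ≤ E := Nat.factorial_pos smax
      set S := ∑ t ∈ Finset.range σ, b ^ (2 * E * (t + 1)) with hSdef
      set D := ∑ t ∈ Finset.range σ, (b ^ (2 * E * (t + 1)) - 1) with hDdef
      have hSD : S = D + σ := by
        rw [hSdef, hDdef]
        have h1 : ∀ t ∈ Finset.range σ,
            b ^ (2 * E * (t + 1)) = (b ^ (2 * E * (t + 1)) - 1) + 1 := by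
          intro t _
          have : 1 ≤ b ^ (2 * E * (t + 1)) := Nat.one_le_pow _ _ (by omega)
          omega
        rw [Finset.sum_congr rfl h1, Finset.sum_add_distrib, Finset.sum_const,
          Finset.card_range, smul_eq_mul, mul_one]
      refine ⟨2 + b + S, by omega, ?_⟩
      intro j hj
      have hjle : 2 + 2 * j ≤ b - 1 := by omega
      have hdig : sdig b (2 + b + S + 2 * j) = σ + 3 + 2 * j := by
        have hxlt : 2 + 2 * j + b < b ^ (2 * E) := by
          have h1 : 2 + 2 * j + b ≤ 2 * b - 1 := by omega
          have h2 : 2 * b ≤ b * b := Nat.mul_le_mul_right b (by omega)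
          have h3 : b * b = b ^ 2 := by ring
          have h4 : b ^ 2 ≤ b ^ (2 * E) := Nat.pow_le_pow_right (by omega) (by omega)
          omega
        obtain ⟨_, heq⟩ := sdig_add_sum hb2 E hE1 (2 + 2 * j + b) hxlt σ
        rw [show 2 + b + S + 2 * j = 2 + 2 * j + b + S from by omega, hSdef, heq]
        have h4 := sdig_add_mul_pow hb2 1 (2 + 2 * j) 1 (by simpa using (by omega : 2 + 2 * j < b))
        rw [pow_one, one_mul] at h4
        rw [h4, sdig_of_lt hb2 (by omega), sdig_of_lt hb2 hb2]
        omega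
      refine ⟨by omega, ?_⟩
      rw [hdig]
      by_contra hne
      obtain ⟨q, hq, hqd⟩ := Nat.exists_prime_and_dvd hne
      have hqm : q ∣ 2 + b + S + 2 * j := hqd.trans (Nat.gcd_dvd_left _ _)
      have hqs : q ∣ σ + 3 + 2 * j := hqd.trans (Nat.gcd_dvd_right _ _)
      rcases hq.eq_two_or_odd' with hq2 | hqodd
      · subst hq2
        obtain ⟨c, hc⟩ := hσeven
        obtain ⟨d, hd⟩ := hqs
        omega
      · obtain ⟨cq, hcq⟩ := hqodd
        by_cases hqb1 : q ∣ b - 1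
        · -- q divides b - 1, so q ≥ p
          have hqJ : q ∣ J := by
            have hself : ordProj[2] (b - 1) * J = b - 1 :=
              Nat.ordProj_mul_ordCompl_eq_self (b - 1) 2
            have h1 : q ∣ ordProj[2] (b - 1) * J := by rw [hself]; exact hqb1
            rcases (Nat.Prime.dvd_mul hq).mp h1 with h | h
            · exfalso
              have h2 : q ∣ 2 := hq.dvd_of_dvd_pow h
              have : q = 2 := (Nat.prime_dvd_prime_iff_eq hq Nat.prime_two).mp h2
              omega
            · exact h
          have hqσp : q ∣ σ + (p + 1) := hqJ.trans hJσ
          have hq_ge : p ≤ q := hmin q hq ⟨cq, hcq⟩ hqb1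
          by_cases hcmp : p + 1 ≤ 3 + 2 * j
          · have hd : q ∣ σ + 3 + 2 * j - (σ + (p + 1)) := Nat.dvd_sub hqs hqσp
            rw [show σ + 3 + 2 * j - (σ + (p + 1)) = 2 + 2 * j - p from by omega] at hd
            have hdpos : 0 < 2 + 2 * j - p := by omega
            have := Nat.le_of_dvd hdpos hd
            omega
          · have hd : q ∣ σ + (p + 1) - (σ + 3 + 2 * j) := Nat.dvd_sub hqσp hqs
            rw [show σ + (p + 1) - (σ + 3 + 2 * j) = p - (2 + 2 * j) from by omega] at hd
            have hdpos : 0 < p - (2 + 2 * j) := by omega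
            have := Nat.le_of_dvd hdpos hd
            omega
        · by_cases hqb : q ∣ b
          · -- q divides b
            have hqS : q ∣ S := by
              rw [hSdef]
              refine Finset.dvd_sum fun t _ => dvd_pow hqb ?_
              have h1 : 0 < 2 * E * (t + 1) := by positivity
              omega
            have hqK : q ∣ K := by
              have hself : ordProj[2] b * K = b := Nat.ordProj_mul_ordCompl_eq_self b 2
              have h1 : q ∣ ordProj[2] b * K := by rw [hself]; exact hqb
              rcases (Nat.Prime.dvd_mul hq).mp h1 with h | h
              · exfalso
                have h2 : q ∣ 2 := hq.dvd_of_dvd_pow h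
                have : q = 2 := (Nat.prime_dvd_prime_iff_eq hq Nat.prime_two).mp h2
                omega
              · exact h
            have hq1 : q ∣ 2 + 2 * j := by
              have h1 : q ∣ 2 + b + S + 2 * j - (b + S) :=
                Nat.dvd_sub hqm (dvd_add hqb hqS)
              rwa [show 2 + b + S + 2 * j - (b + S) = 2 + 2 * j from by omega] at h1
            have hqσ : q ∣ σ := hqK.trans ((Dvd.intro_left 2 rfl).trans h2Kσ)
            have hq2' : q ∣ 3 + 2 * j := by
              have h1 : q ∣ σ + 3 + 2 * j - σ := Nat.dvd_sub hqs hqσ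
              rwa [show σ + 3 + 2 * j - σ = 3 + 2 * j from by omega] at h1
            have hone : q ∣ 1 := by
              have h1 := Nat.dvd_sub hq2' hq1
              rwa [show 3 + 2 * j - (2 + 2 * j) = 1 from by omega] at h1
            exact hq.ne_one (Nat.dvd_one.mp hone)
          · by_cases hqle : q ≤ smax
            · -- medium prime: use Fermat
              have hq3 : 3 ≤ q := by
                have := hq.two_le; omega
              obtain ⟨c, hc⟩ : (q - 1) ∣ E := by
                rw [hEdef]
                exact Nat.dvd_factorial (by omega) (by omega)
              have hferm : q ∣ b ^ (q - 1) - 1 := by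
                have hco : Nat.Coprime b q :=
                  ((Nat.Prime.coprime_iff_not_dvd hq).mpr hqb).symm
                have h1 := Nat.ModEq.pow_totient hco
                rw [Nat.totient_prime hq] at h1
                have h2 : (1 : ℕ) ≤ b ^ (q - 1) := Nat.one_le_pow _ _ (by omega)
                exact (Nat.modEq_iff_dvd' h2).mp h1.symm
              have hqD : q ∣ D := by
                rw [hDdef]
                refine Finset.dvd_sum fun t _ => ?_
                have hrw : b ^ (2 * E * (t + 1)) = (b ^ (q - 1)) ^ (2 * c * (t + 1)) := by
                  rw [← pow_mul]
                  congr 1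
                  rw [hc]; ring
                rw [hrw]
                have h3 := Nat.sub_dvd_pow_sub_pow (b ^ (q - 1)) 1 (2 * c * (t + 1))
                rw [one_pow] at h3
                exact hferm.trans h3
              have hqF : q ∣ (b - 1) + D := by
                have h1 := Nat.dvd_sub hqm hqs
                rwa [show 2 + b + S + 2 * j - (σ + 3 + 2 * j) = (b - 1) + D from by omega] at h1
              have : q ∣ b - 1 := by
                have h2 := Nat.dvd_sub hqF hqD
                rwa [show (b - 1) + D - D = b - 1 from by omega] at h2
              exact hqb1 this
            · -- huge prime cannot divide the digit sum
              push_neg at hqle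
              have := Nat.le_of_dvd (by omega) hqs
              omega
  · -- upper bound
    rintro t ⟨n, hn, hall⟩
    by_contra hgt
    push_neg at hgt
    have hpt : p ≤ t := by omega
    set r := n % p with hrdef
    have hrlt : r < p := Nat.mod_lt _ hp.pos
    have hrn : r ≤ n := Nat.mod_le n p
    have hdm : p ∣ n - r := Nat.dvd_sub_mod n
    obtain ⟨j, hjp, hpdvd⟩ : ∃ j, j < p ∧ p ∣ n + 2 * j := by
      rcases Nat.eq_zero_or_pos r with h0 | h0
      · exact ⟨0, hp.pos, by simpa using Nat.dvd_of_mod_eq_zero (by omega : n % p = 0)⟩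
      · rcases Nat.even_or_odd (p - r) with ⟨a, ha⟩ | ⟨a, ha⟩
        · refine ⟨a, by omega, ?_⟩
          have heq : n + 2 * a = (n - r) + p := by omega
          rw [heq]
          exact dvd_add hdm dvd_rfl
        · refine ⟨a + c0 + 1, by omega, ?_⟩
          have heq : n + 2 * (a + c0 + 1) = (n - r) + p + p := by omega
          rw [heq]
          exact dvd_add (dvd_add hdm dvd_rfl) dvd_rfl
    obtain ⟨hpos, hgcd⟩ := hall j (by omega)
    have hbmod : b % p = 1 := by
      obtain ⟨k, hk⟩ := hpb
      have hbk : b = p * k + 1 := by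
        have := (Nat.sub_eq_iff_eq_add (by omega : 1 ≤ b)).mp hk
        omega
      rw [hbk, Nat.mul_add_mod, Nat.mod_eq_of_lt hp.one_lt]
    have hmdq : (n + 2 * j) ≡ sdig b (n + 2 * j) [MOD p] :=
      Nat.modEq_digits_sum p b hbmod (n + 2 * j)
    have hsd : p ∣ sdig b (n + 2 * j) :=
      Nat.modEq_zero_iff_dvd.mp (hmdq.symm.trans (Nat.modEq_zero_iff_dvd.mpr hpdvd))
    have hdone := Nat.dvd_gcd hpdvd hsd
    rw [hgcd] at hdone
    have := Nat.dvd_one.mp hdone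
    omega
end

section
/- Let b > 2 be even, let p be the smallest odd prime dividing b−1, and let m be a positive integer such that b^m ≡ b (mod q) for every prime q ≤ b. Then for all 0 ≤ j ≤ p−2, the number b^m + 2j + 1 is b-anti-Niven; hence {b^m + 2j + 1 : 0 ≤ j ≤ p−2} is a b-anti-Niven 2-AP of length p−1. -/
/-!
Let `c = 2j + 1 < 2b`. The numbers `n = b ^ m + c` and `b + c` have the same nonzero digits, so both
have digit sum `s = c / b + c % b + 1`, and `b + c - s = (b - 1) (c / b + 1)`. A common prime factor
`q` of `n` and `s` is odd (`n` is odd) and smaller than `p` (`s` is small). In particular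
`q ≤ b`, so `b ^ m ≡ b` modulo `q` and `q` divides `b + c` as well as `s`, hence `(b - 1) (c / b + 1)`.
As `c / b + 1 ≤ 2`, this gives `q ∣ b - 1`, against the minimality of `p`.
-/

theorem sdig_of_lt_s8 {b n : ℕ} (h : n < b) : sdig b n = n := by
  rcases eq_or_ne n 0 with rfl | hn
  · simp [sdig]
  · simp [sdig, Nat.digits_of_lt b n hn h]

theorem sdig_add_pow_mul {b k r : ℕ} (hb : 1 < b) (hr : r < b ^ k) (a : ℕ) :
    sdig b (r + b ^ k * a) = sdig b r + sdig b a := by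
  rcases eq_or_ne a 0 with rfl | ha
  · simp [sdig]
  have hlen : (Nat.digits b r).length + (k - (Nat.digits b r).length) = k := by
    have := (Nat.digits_length_le_iff hb r).2 hr
    omega
  unfold sdig
  rw [← hlen, ← Nat.digits_append_zeroes_append_digits hb (Nat.pos_of_ne_zero ha)]
  simp

theorem sdig_pow_add_of_add_one_lt {b d : ℕ} (hb : 1 < b) (k : ℕ) (hd : d + 1 < b) :
    sdig b (b ^ k + d) = d + 1 := by
  rcases Nat.eq_zero_or_pos k with rfl | hk
  · rw [pow_zero, add_comm, sdig_of_lt_s8 hd]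
  · have hdk : d < b ^ k := by
      calc d < b := by omega
        _ ≤ b ^ k := Nat.le_self_pow hk.ne' b
    rw [add_comm, ← mul_one (b ^ k), sdig_add_pow_mul hb hdk, sdig_of_lt_s8 (by omega : d < b),
      sdig_of_lt_s8 hb]

theorem sdig_pow_add_of_lt_two_mul {b m c : ℕ} (hb : 2 < b) (hm : 0 < m) (hc : c < 2 * b) :
    sdig b (b ^ m + c) = c / b + c % b + 1 := by
  have hcb : c / b < 2 := Nat.div_lt_of_lt_mul (by linarith)
  have hmod : c % b < b ^ 1 := by simpa using Nat.mod_lt c (by omega)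
  have hsplit : b ^ m + c = c % b + b ^ 1 * (b ^ (m - 1) + c / b) := by
    conv_lhs => rw [← Nat.mod_add_div c b, ← pow_sub_one_mul hm.ne']
    ring
  rw [hsplit, sdig_add_pow_mul (by omega) hmod, sdig_of_lt_s8 (Nat.mod_lt c (by omega)),
    sdig_pow_add_of_add_one_lt (by omega) _ (by omega)]
  ring

theorem Nat.Prime.dvd_sub_one_of_dvd_add {q b c : ℕ} (hq : q.Prime) (hq2 : q ≠ 2)
    (hc : c < 2 * b) (hqbc : q ∣ b + c) (hqs : q ∣ c / b + c % b + 1) : q ∣ b - 1 := by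
  have hcb : c / b < 2 := Nat.div_lt_of_lt_mul (by linarith)
  have hsum : b + c = (c / b + c % b + 1) + (b - 1) * (c / b + 1) := by
    obtain ⟨b, rfl⟩ := Nat.exists_eq_add_one.2 (by omega : 0 < b)
    have := Nat.mod_add_div c (b + 1)
    simp only [Nat.add_sub_cancel]
    nlinarith
  rw [hsum, Nat.dvd_add_right hqs] at hqbc
  refine (hq.dvd_mul.1 hqbc).resolve_right fun h => ?_
  have := Nat.le_of_dvd (Nat.succ_pos _) h
  exact hq2 (le_antisymm (by omega) hq.two_le)

theorem Nat.Prime.lt_of_dvd_div_add_mod_add_one {q p b j : ℕ} (hq : q.Prime) (hq2 : q ≠ 2)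
    (hj : j ≤ p - 2) (hpb : p < b) (hqs : q ∣ (2 * j + 1) / b + (2 * j + 1) % b + 1) :
    q < p := by
  have := hq.two_le
  by_cases hcb : 2 * j + 1 < b
  · rw [Nat.div_eq_of_lt hcb, Nat.mod_eq_of_lt hcb,
      show 0 + (2 * j + 1) + 1 = 2 * (j + 1) by ring] at hqs
    have hq_coprime_two : q.Coprime 2 := (Nat.coprime_primes hq Nat.prime_two).2 hq2
    have := Nat.le_of_dvd (Nat.succ_pos j) (hq_coprime_two.dvd_of_dvd_mul_left hqs)
    omega
  · rw [Nat.div_eq_of_lt_le (k := 1) (by omega) (by omega), Nat.mod_eq_sub_mod (by omega),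
      Nat.mod_eq_of_lt (by omega)] at hqs
    have := Nat.le_of_dvd (by omega) hqs
    omega

theorem stmt_8_general (b p m : ℕ) (hb : 2 < b) (heven : Even b)
    (hpb : p ∣ b - 1)
    (hmin : ∀ q : ℕ, q.Prime → Odd q → q ∣ b - 1 → p ≤ q)
    (hm : 0 < m) (hmod : ∀ q : ℕ, q.Prime → q ≤ b → b ^ m ≡ b [MOD q]) :
    ∀ j : ℕ, j ≤ p - 2 → AntiNiven b (b ^ m + 2 * j + 1) := by
  intro j hj
  have hp_lt_b : p < b := (Nat.le_of_dvd (by omega) hpb).trans_lt (by omega)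
  have hc : 2 * j + 1 < 2 * b := by omega
  have hodd : Odd (b ^ m + (2 * j + 1)) :=
    (heven.pow_of_ne_zero hm.ne').add_odd (odd_two_mul_add_one j)
  refine ⟨by positivity, ?_⟩
  rw [add_assoc, sdig_pow_add_of_lt_two_mul hb hm hc]
  refine Nat.coprime_of_dvd fun q hq hqn hqs => ?_
  have hq2 : q ≠ 2 := by
    rintro rfl
    exact hodd.not_two_dvd_nat hqn
  have hqp : q < p := hq.lt_of_dvd_div_add_mod_add_one hq2 hj hp_lt_b hqs
  have hqbc : q ∣ b + (2 * j + 1) :=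
    (((hmod q hq (by omega)).add_right _).dvd_iff dvd_rfl).1 hqn
  exact (hmin q hq (hq.odd_of_ne_two hq2) (hq.dvd_sub_one_of_dvd_add hq2 hc hqbc hqs)).not_gt hqp

theorem stmt_8 (b p m : ℕ) (hb : 2 < b) (heven : Even b)
    (hp : p.Prime) (hodd : Odd p) (hpb : p ∣ b - 1)
    (hmin : ∀ q : ℕ, q.Prime → Odd q → q ∣ b - 1 → p ≤ q)
    (hm : 0 < m) (hmod : ∀ q : ℕ, q.Prime → q ≤ b → b ^ m ≡ b [MOD q]) :
    ∀ j : ℕ, j ≤ p - 2 → AntiNiven b (b ^ m + 2 * j + 1) :=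
  stmt_8_general b p m hb heven hpb hmin hm hmod
end

section
/- Let b ≥ 6 be even and let 3 ≤ d ≤ b/2 be an odd integer. Suppose ab + a_0 and ab + a_0 + d are both b-anti-Niven, where a ≥ 0 and 0 ≤ a_0 ≤ b−1−d are integers (so both lie in the interval [ab, ab+b−1]). Then the base-b digit sum s_b(a) is odd. -/
lemma sdig_mul_add (b a a₀ : ℕ) (hb : 2 ≤ b) (h : a₀ < b) :
    sdig b (a * b + a₀) = sdig b a + a₀ := by
  rcases Nat.eq_zero_or_pos (a * b + a₀) with h0 | hpos
  · have h1 : a * b = 0 := by omega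
    have h2 : a = 0 := by
      rcases Nat.mul_eq_zero.mp h1 with h | h
      · exact h
      · omega
    have h3 : a₀ = 0 := by omega
    simp [h2, h3, sdig]
  · unfold sdig
    rw [Nat.digits_def' (by omega : 1 < b) hpos]
    have hm : (a * b + a₀) % b = a₀ := by
      rw [mul_comm, Nat.mul_add_mod, Nat.mod_eq_of_lt h]
    have hd : (a * b + a₀) / b = a := by
      rw [mul_comm, Nat.mul_add_div (by omega : 0 < b), Nat.div_eq_of_lt h, add_zero]
    rw [hm, hd, List.sum_cons, add_comm]

theorem stmt_10 (b d a a₀ : ℕ) (hb : 6 ≤ b) (heven : Even b)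
    (hd3 : 3 ≤ d) (hdb : d ≤ b / 2) (hodd : Odd d)
    (ha₀ : a₀ ≤ b - 1 - d)
    (h1 : AntiNiven b (a * b + a₀)) (h2 : AntiNiven b (a * b + a₀ + d)) :
    Odd (sdig b a) := by
  by_contra hne
  rw [Nat.not_odd_iff_even] at hne
  have hb2 : (2 : ℕ) ∣ b := heven.two_dvd
  have ha0b : a₀ < b := by omega
  have hadb : a₀ + d < b := by omega
  have e1 : sdig b (a * b + a₀) = sdig b a + a₀ :=
    sdig_mul_add b a a₀ (by omega) ha0b
  have e2 : sdig b (a * b + a₀ + d) = sdig b a + (a₀ + d) := by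
    rw [add_assoc]
    exact sdig_mul_add b a (a₀ + d) (by omega) hadb
  obtain ⟨hp1, hg1⟩ := h1
  obtain ⟨hp2, hg2⟩ := h2
  obtain ⟨s, hs⟩ := hne
  obtain ⟨t, ht⟩ := hodd
  obtain ⟨u, hu⟩ := (by exact hb2 : 2 ∣ b)
  have hab : a * b = 2 * (a * u) := by rw [hu]; ring
  rcases Nat.even_or_odd a₀ with he | ho
  · obtain ⟨v, hv⟩ := he
    have h2n : 2 ∣ (a * b + a₀) := ⟨a * u + v, by omega⟩
    have h2s : 2 ∣ sdig b (a * b + a₀) := ⟨s + v, by omega⟩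
    have := Nat.dvd_gcd h2n h2s
    rw [hg1] at this
    omega
  · obtain ⟨v, hv⟩ := ho
    have h2n : 2 ∣ (a * b + a₀ + d) := ⟨a * u + v + t + 1, by omega⟩
    have h2s : 2 ∣ sdig b (a * b + a₀ + d) := ⟨s + v + t + 1, by omega⟩
    have := Nat.dvd_gcd h2n h2s
    rw [hg2] at this
    omega
end

section
/- For every nonnegative integer a and every even integer b ≥ 2, at least one of s_b(a), s_b(a+1), s_b(a+2) is even, where s_b denotes the base-b digit sum; that is, there are no three consecutive nonnegative integers a, a+1, a+2 whose base-b digit sums are all odd. -/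
lemma sdig_succ (b n : ℕ) (hb : 2 ≤ b) (h : n % b + 1 < b) :
    sdig b (n + 1) = sdig b n + 1 := by
  have hb1 : 1 < b := hb
  have e := Nat.div_add_mod n b
  have hmod : (n + 1) % b = n % b + 1 := by
    have : n + 1 = b * (n / b) + (n % b + 1) := by omega
    rw [this, Nat.mul_add_mod, Nat.mod_eq_of_lt h]
  have hdvd : ¬ b ∣ (n + 1) := by
    intro hd
    rw [Nat.dvd_iff_mod_eq_zero, hmod] at hd
    exact Nat.succ_ne_zero _ hd
  have hdiv : (n + 1) / b = n / b := by
    rw [Nat.succ_div, if_neg hdvd]; simp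
  rw [sdig, Nat.digits_def' hb1 (Nat.succ_pos n), hmod, hdiv]
  rcases Nat.eq_zero_or_pos n with hn | hn
  · subst hn; simp [sdig, Nat.zero_div, Nat.digits_zero]
  · rw [sdig, Nat.digits_def' hb1 hn]
    simp [List.sum_cons]; ring

theorem stmt_11 (b : ℕ) (hb : 2 ≤ b) (heven : Even b) :
    ∀ a : ℕ, Even (sdig b a) ∨ Even (sdig b (a + 1)) ∨ Even (sdig b (a + 2)) := by
  intro a
  by_cases h : a % b + 1 < b
  · have hs := sdig_succ b a hb h
    rcases Nat.even_or_odd (sdig b a) with he | ho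
    · exact Or.inl he
    · exact Or.inr (Or.inl (by rw [hs]; exact Odd.add_one ho))
  · have hlt : a % b < b := Nat.mod_lt _ (by omega)
    have hmod : a % b = b - 1 := by omega
    have e := Nat.div_add_mod a b
    have h1 : (a + 1) % b = 0 := by
      have : a + 1 = b * (a / b + 1) := by
        rw [Nat.mul_add, Nat.mul_one]; omega
      rw [this, Nat.mul_mod_right]
    have hs := sdig_succ b (a + 1) hb (by rw [h1]; omega)
    rcases Nat.even_or_odd (sdig b (a + 1)) with he | ho
    · exact Or.inr (Or.inl he)
    · exact Or.inr (Or.inr (by rw [show a + 2 = a + 1 + 1 by ring, hs]; exact Odd.add_one ho))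
end

section
/- Let b > 2 and let p be the smallest prime dividing b−1. If m is a positive integer such that b^m ≡ b (mod q) for every prime q < p, then b^m + j is b-anti-Niven for all 0 ≤ j ≤ p−2. -/
lemma sdig_pow (b k : ℕ) (hb : 1 < b) : sdig b (b ^ k) = 1 := by
  induction k with
  | zero =>
    rw [sdig, pow_zero, Nat.digits_def' hb one_pos]
    simp [Nat.mod_eq_of_lt hb, Nat.div_eq_of_lt hb]
  | succ k ih =>
    have hpos : 0 < b ^ (k + 1) := by positivity
    have hmod : (b ^ (k + 1)) % b = 0 := by
      simp [pow_succ, Nat.mul_mod_left, Nat.mul_comm]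
    have hdiv : b ^ (k + 1) / b = b ^ k := by
      rw [pow_succ, Nat.mul_div_cancel _ (by omega)]
    simp only [sdig, Nat.digits_def' hb hpos, hmod, hdiv, List.sum_cons]
    simpa [sdig] using ih

lemma sdig_pow_add (b m j : ℕ) (hb : 1 < b) (hm : 0 < m) (hj : j < b) :
    sdig b (b ^ m + j) = j + 1 := by
  obtain ⟨k, rfl⟩ : ∃ k, m = k + 1 := ⟨m - 1, by omega⟩
  have he : b ^ (k + 1) + j = b * b ^ k + j := by ring
  have hpos : 0 < b ^ (k + 1) + j := by positivity
  rw [sdig, Nat.digits_def' hb hpos, he, Nat.mul_add_mod, Nat.mod_eq_of_lt hj,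
    Nat.mul_add_div (by omega), Nat.div_eq_of_lt hj, Nat.add_zero, List.sum_cons]
  have := sdig_pow b k hb
  simp only [sdig] at this
  omega

theorem stmt_19 (b p m : ℕ) (hb : 2 < b) (hp : p.Prime) (hpb : p ∣ b - 1)
    (hmin : ∀ q : ℕ, q.Prime → q ∣ b - 1 → p ≤ q)
    (hm : 0 < m) (hmod : ∀ q : ℕ, q.Prime → q < p → b ^ m ≡ b [MOD q]) :
    ∀ j : ℕ, j ≤ p - 2 → AntiNiven b (b ^ m + j) := by
  intro j hj
  have hp2 : 2 ≤ p := hp.two_le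
  have hpb' : p ≤ b - 1 := Nat.le_of_dvd (by omega) hpb
  have hjb : j < b := by omega
  have hs : sdig b (b ^ m + j) = j + 1 := sdig_pow_add b m j (by omega) hm hjb
  refine ⟨by positivity, ?_⟩
  rw [hs]
  by_contra hg
  obtain ⟨q, hq, hqd⟩ := Nat.exists_prime_and_dvd (n := Nat.gcd (b ^ m + j) (j + 1)) hg
  have hq1' : q ∣ b ^ m + j := hqd.trans (Nat.gcd_dvd_left _ _)
  have hq2' : q ∣ j + 1 := hqd.trans (Nat.gcd_dvd_right _ _)
  have hqlt : q < p := by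
    have := Nat.le_of_dvd (by omega) hq2'
    omega
  have hbm := hmod q hq hqlt
  have h1 : b ^ m + j ≡ 0 [MOD q] := (Nat.modEq_zero_iff_dvd).mpr hq1'
  have h3 : b + j ≡ 0 [MOD q] := (hbm.symm.add_right j).trans h1
  have hd1 : q ∣ b + j := Nat.modEq_zero_iff_dvd.mp h3
  have hdb : q ∣ b - 1 := by
    have h := Nat.dvd_sub hd1 hq2'
    have : b + j - (j + 1) = b - 1 := by omega
    rwa [this] at h
  have := hmin q hq hdb
  omega
end
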